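/- Let W : [-1,1] → [0,∞) satisfy (H1). Then there is NO constant c > 0 such that for all 1-periodic u ∈ W^{1,2}_per((0,1);[−1,1]) and all δ > 0 the inequality c·|u|_{H^{1/2}(0,1)}² ≤ ∫₀¹ ( (1/δ)·W(u) + δ·|u'|² ) dx holds. Concretely, for 0 < δ < 1/8 the 1-periodic piecewise affine function u_δ equal to −1 on (δ, 1/2 − δ/2), equal to +1 on (1/2 + δ/2, 1), interpolating affinely with slope ∓2/δ on (0,δ) and slope +2/δ on (1/2 − δ/2, 1/2 + δ/2), satisfies ∫₀¹ ( (1/δ)·W(u_δ) + δ·|u_δ'|² ) dx ≤ 2·max_{[−1,1]} W + 8, while |u_δ|_{H^{1/2}(0,1)}² → ∞ as δ → 0. -/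

import Mathlib

/-!
The competitor `u_δ` is continuous with right derivative `uSharpDeriv δ` at every point, so the
fundamental theorem of calculus puts it in `W^{1,2}_per`. Its energy lives on the two transition
layers of width `δ`, where `δ |u_δ'|² = 4/δ` and `W(u_δ) ≤ max W`; this gives `2 max W + 8`.

Integrating the piecewise affine `u_δ` against `e^{-2πikt}` gives
`δ (2πik)² û_k = 2 (e^{cδ} - 1 + e^{c(1-δ)/2} - e^{c(1+δ)/2})` with `c = -2πik`. The four
unimodular exponentials give `|û_k| = O(1/(δk²))`, so the series defining `|u_δ|²_{H^{1/2}}`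
converges. For odd `k` the bracket is `e^{2w} - 1 + e^w - e^{-w} = 4w + O(|w|²)` with
`w = cδ/2`, so `|û_k| ≥ 1/(π|k|)` as long as `3π|k|δ ≤ 1`. Summing over the odd
`|k| ≲ 1/δ` bounds `|u_δ|²_{H^{1/2}}` below by a partial sum of the odd harmonic series, which
diverges as `δ → 0`. An interpolation inequality with constant `c > 0` would bound it by
`(2 max W + 8)/c`.
-/

open MeasureTheory Set Filter

noncomputable section

/-- Elements of `W^{1,2}_per((0,1);[−1,1])`: `1`-periodic functions with values in
`[−1,1]`, encoded via absolute continuity with a periodic derivative `u'` which is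
square-integrable on the periodicity cell. -/
structure IsPerW12 (u u' : ℝ → ℝ) : Prop where
  u_per : Function.Periodic u 1
  u'_per : Function.Periodic u' 1
  u_ftc : ∀ x : ℝ, u x = u 0 + ∫ t in (0:ℝ)..x, u' t
  u_mem : ∀ x : ℝ, u x ∈ Icc (-1:ℝ) 1
  u'_l2 : MemLp u' 2 (volume.restrict (Ioo (0:ℝ) 1))

/-- Fourier coefficient `û_k = ∫₀¹ u(t)·e^{−2πi k t} dt`. -/
def fourierCoef1 (u : ℝ → ℝ) (k : ℤ) : ℂ :=
  ∫ t in Ioo (0:ℝ) 1,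
    (u t : ℂ) * Complex.exp (-(2 * Real.pi * Complex.I) * (k : ℂ) * (t : ℂ))

/-- The squared `H^{1/2}(0,1)` seminorm `|u|²_{H^{1/2}} = Σ_{k∈ℤ} |k|·|û_k|²`. -/
def seminormHhalfSq (u : ℝ → ℝ) : ℝ :=
  ∑' k : ℤ, |(k : ℝ)| * ‖fourierCoef1 u k‖ ^ 2

/-- The `1`-periodic piecewise affine competitor `u_δ`: equal to `−1` on
`(δ, 1/2 − δ/2)`, to `+1` on `(1/2 + δ/2, 1)`, affine with slope `−2/δ` on `(0,δ)`
and slope `+2/δ` on `(1/2 − δ/2, 1/2 + δ/2)`. -/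
def uSharp (δ x : ℝ) : ℝ :=
  if Int.fract x < δ then -2 / δ * Int.fract x + 1
  else if Int.fract x < 1 / 2 - δ / 2 then -1
  else if Int.fract x < 1 / 2 + δ / 2 then 2 / δ * Int.fract x - 1 / δ
  else 1

/-- The derivative of `u_δ`. -/
def uSharpDeriv (δ x : ℝ) : ℝ :=
  if Int.fract x < δ then -2 / δ
  else if Int.fract x < 1 / 2 - δ / 2 then 0
  else if Int.fract x < 1 / 2 + δ / 2 then 2 / δ
  else 0

open Complex intervalIntegral Topology

open scoped Real

theorem Continuous.if_lt_of_eq {α γ : Type*} [TopologicalSpace α] [LinearOrder α]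
    [OrderClosedTopology α] [TopologicalSpace γ] {p q : α → γ} {a : α}
    (hp : Continuous p) (hq : Continuous q) (hpq : p a = q a) :
    Continuous fun t => if t < a then p t else q t :=
  (hq.if_le hp (continuous_const (y := a)) continuous_id
    fun t (ht : a = t) => ht ▸ hpq.symm).congr fun t => by simp only [id, ← not_lt, ite_not]

theorem HasDerivWithinAt.ite_lt_Ici {F : Type*} [NormedAddCommGroup F] [NormedSpace ℝ F]
    {p q : ℝ → F} {p' q' : F} {a t : ℝ}
    (hp : HasDerivWithinAt p p' (Ici t) t) (hq : HasDerivWithinAt q q' (Ici t) t) :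
    HasDerivWithinAt (fun s => if s < a then p s else q s) (if t < a then p' else q')
      (Ici t) t := by
  split_ifs with h
  · refine hp.congr_of_eventuallyEq ?_ (if_pos h)
    filter_upwards [nhdsWithin_le_nhds (Iio_mem_nhds h)] with s hs using if_pos hs
  · exact hq.congr (fun s hs => if_neg fun hsa => h (lt_of_le_of_lt hs hsa)) (if_neg h)

theorem HasDerivWithinAt.comp_fract_Ici {F : Type*} [NormedAddCommGroup F] [NormedSpace ℝ F]
    {g : ℝ → F} {g' : F} {x : ℝ}
    (hg : HasDerivWithinAt g g' (Ici (Int.fract x)) (Int.fract x)) :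
    HasDerivWithinAt (fun y => g (Int.fract y)) g' (Ici x) x := by
  rw [← Int.self_sub_floor] at hg
  have hshift : HasDerivWithinAt (fun y => g (y - ⌊x⌋)) g' (Ici x) x := by
    simpa [Function.comp_def] using
      hg.scomp x ((hasDerivWithinAt_id x (Ici x)).sub_const (⌊x⌋ : ℝ))
        fun y hy => by simp only [id, mem_Ici] at hy ⊢; linarith
  refine hshift.congr_of_eventuallyEq ?_ (by rw [Int.self_sub_floor])
  filter_upwards [self_mem_nhdsWithin,
    nhdsWithin_le_nhds (Iio_mem_nhds (Int.lt_floor_add_one x))] with y (hxy : x ≤ y) hy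
  have : ⌊y⌋ = ⌊x⌋ := Int.floor_eq_iff.2 ⟨(Int.floor_le x).trans hxy, hy⟩
  rw [← Int.self_sub_floor, this]

theorem intervalIntegral.integral_eq_add_add_add {E : Type*} [NormedAddCommGroup E]
    [NormedSpace ℝ E] {f : ℝ → E} {a b c d e : ℝ} (hab : IntervalIntegrable f volume a b)
    (hbc : IntervalIntegrable f volume b c) (hcd : IntervalIntegrable f volume c d)
    (hde : IntervalIntegrable f volume d e) :
    ∫ t in a..e, f t = (∫ t in a..b, f t) + (∫ t in b..c, f t) + (∫ t in c..d, f t) +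
      ∫ t in d..e, f t := by
  rw [integral_add_adjacent_intervals hab hbc,
    integral_add_adjacent_intervals (hab.trans hbc) hcd,
    integral_add_adjacent_intervals ((hab.trans hbc).trans hcd) hde]

theorem integral_affine_mul_cexp (c P Q : ℂ) (l r : ℝ) :
    c ^ 2 * ∫ t in l..r, (P * t + Q) * cexp (c * t) =
      (c * (P * r + Q) - P) * cexp (c * r) - (c * (P * l + Q) - P) * cexp (c * l) := by
  rw [← intervalIntegral.integral_const_mul]
  refine integral_eq_sub_of_hasDerivAt (f := fun s : ℝ => (c * (P * s + Q) - P) * cexp (c * s))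
    (fun t _ => ?_) ?_
  · have hid : HasDerivAt (fun s : ℝ => (s : ℂ)) 1 t := ofRealCLM.hasDerivAt
    exact ((((hid.const_mul P).add_const Q).const_mul c).sub_const P).fun_mul
      (hid.const_mul c).cexp |>.congr_deriv (by ring)
  · exact Continuous.intervalIntegrable (by fun_prop) _ _

theorem integral_mul_cexp_of_eqOn_affine {f : ℝ → ℂ} {c P Q : ℂ} {l r : ℝ} (hlr : l ≤ r)
    (hf : EqOn f (fun t => P * t + Q) (Ioo l r)) :
    c ^ 2 * ∫ t in l..r, f t * cexp (c * t) =
      (c * (P * r + Q) - P) * cexp (c * r) - (c * (P * l + Q) - P) * cexp (c * l) := by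
  rw [integral_congr_Ioo_of_le hlr (g := fun t => (P * t + Q) * cexp (c * t)) fun t ht => by
    simp only [hf ht], integral_affine_mul_cexp]

theorem norm_exp_two_mul_sub_one_add_exp_sub_exp_neg_sub_le {w : ℂ} (hw : ‖w‖ ≤ 1 / 2) :
    ‖cexp (2 * w) - 1 + (cexp w - cexp (-w)) - 4 * w‖ ≤ 6 * ‖w‖ ^ 2 := by
  have h2w : ‖2 * w‖ = 2 * ‖w‖ := by simp
  have e₁ := norm_exp_sub_one_sub_id_le (x := 2 * w) (by linarith)
  have e₂ := norm_exp_sub_one_sub_id_le (x := w) (by linarith)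
  have e₃ := norm_exp_sub_one_sub_id_le (x := -w) (by rw [norm_neg]; linarith)
  rw [h2w] at e₁
  rw [norm_neg] at e₃
  calc ‖cexp (2 * w) - 1 + (cexp w - cexp (-w)) - 4 * w‖
      = ‖(cexp (2 * w) - 1 - 2 * w) + (cexp w - 1 - w) - (cexp (-w) - 1 - -w)‖ := by ring_nf
    _ ≤ ‖cexp (2 * w) - 1 - 2 * w‖ + ‖cexp w - 1 - w‖ + ‖cexp (-w) - 1 - -w‖ :=
        norm_sub_le_of_le (norm_add_le _ _) le_rfl
    _ ≤ 6 * ‖w‖ ^ 2 := by nlinarith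

theorem tendsto_sum_range_one_div_two_mul_add_one_atTop :
    Tendsto (fun N : ℕ => ∑ j ∈ Finset.range N, 1 / (2 * (j : ℝ) + 1)) atTop atTop := by
  refine tendsto_atTop_mono (fun N => ?_)
    (Real.tendsto_sum_range_one_div_nat_succ_atTop.const_mul_atTop one_half_pos)
  rw [Finset.mul_sum]
  refine Finset.sum_le_sum fun j _ => ?_
  rw [div_mul_div_comm, one_mul]
  gcongr
  linarith

def uSharpProfile (δ t : ℝ) : ℝ :=
  if t < δ then -2 / δ * t + 1
  else if t < 1 / 2 - δ / 2 then -1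
  else if t < 1 / 2 + δ / 2 then 2 / δ * t - 1 / δ
  else 1

theorem uSharp_eq_comp_fract (δ : ℝ) : uSharp δ = uSharpProfile δ ∘ Int.fract := rfl

theorem uSharp_periodic (δ : ℝ) : Function.Periodic (uSharp δ) 1 := fun x => by
  simp only [uSharp, Int.fract_add_one]

theorem uSharpDeriv_periodic (δ : ℝ) : Function.Periodic (uSharpDeriv δ) 1 := fun x => by
  simp only [uSharpDeriv, Int.fract_add_one]

theorem uSharp_mem_Icc {δ : ℝ} (hδ : 0 < δ) (x : ℝ) : uSharp δ x ∈ Icc (-1 : ℝ) 1 := by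
  have h₀ := Int.fract_nonneg x
  unfold uSharp
  split_ifs with h₁ h₂ h₃
  · have : Int.fract x / δ < 1 := (div_lt_one hδ).2 h₁
    have : 0 ≤ Int.fract x / δ := by positivity
    rw [show -2 / δ * Int.fract x + 1 = 1 - 2 * (Int.fract x / δ) by ring]
    constructor <;> linarith
  · norm_num
  · rw [show 2 / δ * Int.fract x - 1 / δ = (2 * Int.fract x - 1) / δ by ring, mem_Icc,
      le_div_iff₀ hδ, div_le_iff₀ hδ]
    constructor <;> linarith
  · norm_num

theorem measurable_uSharpDeriv (δ : ℝ) : Measurable (uSharpDeriv δ) := by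
  unfold uSharpDeriv
  refine .ite ?_ measurable_const (.ite ?_ measurable_const (.ite ?_ measurable_const
    measurable_const)) <;> exact measurableSet_lt measurable_fract measurable_const

theorem uSharpDeriv_eq_zero_and_or_abs_eq {δ : ℝ} (hδ : 0 < δ) (x : ℝ) :
    (uSharpDeriv δ x = 0 ∧ (uSharp δ x = -1 ∨ uSharp δ x = 1)) ∨
      |uSharpDeriv δ x| = 2 / δ := by
  unfold uSharp uSharpDeriv
  split_ifs
  · exact Or.inr (by rw [neg_div, abs_neg, abs_of_pos (by positivity)])
  · exact Or.inl ⟨rfl, Or.inl rfl⟩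
  · exact Or.inr (abs_of_pos (by positivity))
  · exact Or.inl ⟨rfl, Or.inr rfl⟩

theorem abs_uSharpDeriv_le {δ : ℝ} (hδ : 0 < δ) (x : ℝ) : |uSharpDeriv δ x| ≤ 2 / δ := by
  rcases uSharpDeriv_eq_zero_and_or_abs_eq hδ x with ⟨h, -⟩ | h
  · rw [h, abs_zero]; positivity
  · exact h.le

theorem intervalIntegrable_uSharpDeriv_pow {δ : ℝ} (hδ : 0 < δ) (n : ℕ) (a b : ℝ) :
    IntervalIntegrable (fun t => uSharpDeriv δ t ^ n) volume a b :=
  (intervalIntegrable_const (c := (2 / δ) ^ n)).mono_fun'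
    ((measurable_uSharpDeriv δ).pow_const n).aestronglyMeasurable
    (ae_of_all _ fun t => by
      simpa only [norm_pow, Real.norm_eq_abs] using
        pow_le_pow_left₀ (abs_nonneg _) (abs_uSharpDeriv_le hδ t) n)

theorem hasDerivWithinAt_uSharp_Ici (δ x : ℝ) :
    HasDerivWithinAt (uSharp δ) (uSharpDeriv δ x) (Ici x) x := by
  have affine (m b t : ℝ) : HasDerivWithinAt (fun s => m * s + b) m (Ici t) t := by
    simpa using ((hasDerivWithinAt_id t (Ici t)).const_mul m).add_const b
  rw [uSharp_eq_comp_fract]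
  exact HasDerivWithinAt.comp_fract_Ici <| .ite_lt_Ici (affine _ _ _) <|
    .ite_lt_Ici (by simpa using affine 0 (-1) _) <|
    .ite_lt_Ici (by simpa [sub_eq_add_neg] using affine (2 / δ) (-(1 / δ)) _) <|
    by simpa using affine 0 1 _

theorem continuous_uSharp {δ : ℝ} (hδ : δ ∈ Ioo (0 : ℝ) (1 / 3)) :
    Continuous (uSharp δ) := by
  obtain ⟨hδ₀, hδ₁⟩ := hδ
  rw [uSharp_eq_comp_fract]
  refine ContinuousOn.comp_fract'' (Continuous.continuousOn ?_) ?_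
  · refine .if_lt_of_eq (by fun_prop) (.if_lt_of_eq continuous_const
      (.if_lt_of_eq (by fun_prop) continuous_const ?_) ?_) ?_
    · field_simp; ring
    · rw [if_pos (by linarith)]; field_simp; ring
    · rw [if_pos (by linarith)]; field_simp; ring
  · simp only [uSharpProfile]
    rw [if_pos hδ₀, if_neg (by linarith), if_neg (by linarith), if_neg (by linarith)]
    ring

theorem uSharp_eq_add_integral {δ : ℝ} (hδ : δ ∈ Ioo (0 : ℝ) (1 / 3)) (x : ℝ) :
    uSharp δ x = uSharp δ 0 + ∫ t in (0 : ℝ)..x, uSharpDeriv δ t := by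
  rw [integral_eq_sub_of_hasDeriv_right (continuous_uSharp hδ).continuousOn
    (fun y _ => (hasDerivWithinAt_uSharp_Ici δ y).mono Ioi_subset_Ici_self)
    (by simpa using intervalIntegrable_uSharpDeriv_pow hδ.1 1 0 x)]
  ring

theorem uSharp_isPerW12 {δ : ℝ} (hδ : δ ∈ Ioo (0 : ℝ) (1 / 3)) :
    IsPerW12 (uSharp δ) (uSharpDeriv δ) where
  u_per := uSharp_periodic δ
  u'_per := uSharpDeriv_periodic δ
  u_ftc := uSharp_eq_add_integral hδ
  u_mem := uSharp_mem_Icc hδ.1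
  u'_l2 := MemLp.of_bound (measurable_uSharpDeriv δ).aestronglyMeasurable (2 / δ)
    (ae_of_all _ fun x => abs_uSharpDeriv_le hδ.1 x)

theorem uSharp_on_descent {δ t : ℝ} (hδ : δ ∈ Ioo (0 : ℝ) (1 / 3)) (ht : t ∈ Ioo 0 δ) :
    uSharp δ t = 1 - 2 * t / δ ∧ uSharpDeriv δ t = -2 / δ := by
  have hfract : Int.fract t = t := Int.fract_eq_self.2 ⟨ht.1.le, by linarith [ht.2, hδ.2]⟩
  simp only [uSharp, uSharpDeriv, hfract, if_pos ht.2, and_true]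
  ring

theorem uSharp_on_lowerPlateau {δ t : ℝ} (hδ : δ ∈ Ioo (0 : ℝ) (1 / 3))
    (ht : t ∈ Ioo δ (1 / 2 - δ / 2)) : uSharp δ t = -1 ∧ uSharpDeriv δ t = 0 := by
  have hfract : Int.fract t = t :=
    Int.fract_eq_self.2 ⟨by linarith [ht.1, hδ.1], by linarith [ht.2, hδ.1]⟩
  simp only [uSharp, uSharpDeriv, hfract, if_neg (not_lt.2 ht.1.le), if_pos ht.2, and_self]

theorem uSharp_on_ascent {δ t : ℝ} (hδ : δ ∈ Ioo (0 : ℝ) (1 / 3))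
    (ht : t ∈ Ioo (1 / 2 - δ / 2) (1 / 2 + δ / 2)) :
    uSharp δ t = (2 * t - 1) / δ ∧ uSharpDeriv δ t = 2 / δ := by
  have hfract : Int.fract t = t :=
    Int.fract_eq_self.2 ⟨by linarith [ht.1, hδ.2], by linarith [ht.2, hδ.2]⟩
  simp only [uSharp, uSharpDeriv, hfract, if_neg (not_lt.2 ht.1.le),
    if_neg (show ¬ t < δ by linarith [ht.1, hδ.2]), if_pos ht.2, and_true]
  ring

theorem uSharp_on_upperPlateau {δ t : ℝ} (hδ : δ ∈ Ioo (0 : ℝ) (1 / 3))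
    (ht : t ∈ Ioo (1 / 2 + δ / 2) 1) : uSharp δ t = 1 ∧ uSharpDeriv δ t = 0 := by
  have hfract : Int.fract t = t := Int.fract_eq_self.2 ⟨by linarith [ht.1, hδ.1], ht.2⟩
  simp only [uSharp, uSharpDeriv, hfract, if_neg (not_lt.2 ht.1.le),
    if_neg (show ¬ t < δ by linarith [ht.1, hδ.2]),
    if_neg (show ¬ t < 1 / 2 - δ / 2 by linarith [ht.1, hδ.1]), and_self]

theorem integral_sq_uSharpDeriv {δ : ℝ} (hδ : δ ∈ Ioo (0 : ℝ) (1 / 3)) :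
    ∫ t in (0 : ℝ)..1, uSharpDeriv δ t ^ 2 = 8 / δ := by
  have ⟨hδ₀, hδ₁⟩ := hδ
  have hint := intervalIntegrable_uSharpDeriv_pow hδ₀ 2
  have h₁ : ∫ t in (0 : ℝ)..δ, uSharpDeriv δ t ^ 2 = ∫ _ in (0 : ℝ)..δ, (2 / δ) ^ 2 :=
    integral_congr_Ioo_of_le hδ₀.le fun t ht => by
      simp only [(uSharp_on_descent hδ ht).2, neg_div, neg_sq]
  have h₂ :
      ∫ t in δ..(1 / 2 - δ / 2), uSharpDeriv δ t ^ 2 = ∫ _ in δ..(1 / 2 - δ / 2), 0 :=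
    integral_congr_Ioo_of_le (by linarith) fun t ht => by
      simp [(uSharp_on_lowerPlateau hδ ht).2]
  have h₃ : ∫ t in (1 / 2 - δ / 2)..(1 / 2 + δ / 2), uSharpDeriv δ t ^ 2 =
      ∫ _ in (1 / 2 - δ / 2)..(1 / 2 + δ / 2), (2 / δ) ^ 2 :=
    integral_congr_Ioo_of_le (by linarith) fun t ht => by
      simp only [(uSharp_on_ascent hδ ht).2]
  have h₄ :
      ∫ t in (1 / 2 + δ / 2)..1, uSharpDeriv δ t ^ 2 = ∫ _ in (1 / 2 + δ / 2)..1, 0 :=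
    integral_congr_Ioo_of_le (by linarith) fun t ht => by
      simp [(uSharp_on_upperPlateau hδ ht).2]
  rw [integral_eq_add_add_add (hint 0 δ) (hint δ (1 / 2 - δ / 2))
      (hint (1 / 2 - δ / 2) (1 / 2 + δ / 2)) (hint (1 / 2 + δ / 2) 1), h₁, h₂, h₃, h₄]
  simp only [intervalIntegral.integral_const, smul_eq_mul]
  field_simp
  ring

theorem integral_energy_uSharp_le {δ M : ℝ} {W : ℝ → ℝ}
    (hδ : δ ∈ Ioo (0 : ℝ) (1 / 3))
    (hW_nonneg : ∀ x ∈ Icc (-1 : ℝ) 1, 0 ≤ W x)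
    (hW_le : ∀ x ∈ Icc (-1 : ℝ) 1, W x ≤ M) (hW_neg_one : W (-1) = 0) (hW_one : W 1 = 0) :
    ∫ x in Ioo (0 : ℝ) 1, (1 / δ * W (uSharp δ x) + δ * uSharpDeriv δ x ^ 2) ≤
      2 * M + 8 := by
  have hδ₀ := hδ.1
  have hpointwise : ∀ x, 1 / δ * W (uSharp δ x) + δ * uSharpDeriv δ x ^ 2 ≤
      (M / 4 + 1) * (δ * uSharpDeriv δ x ^ 2) := fun x => by
    rcases uSharpDeriv_eq_zero_and_or_abs_eq hδ₀ x with ⟨h', h | h⟩ | h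
    · simp [h', h, hW_neg_one]
    · simp [h', h, hW_one]
    · have hsq : δ * uSharpDeriv δ x ^ 2 = 4 / δ := by
        rw [← sq_abs, h]; field_simp; ring
      calc 1 / δ * W (uSharp δ x) + δ * uSharpDeriv δ x ^ 2 ≤ 1 / δ * M + 4 / δ := by
            rw [hsq]; gcongr; exact hW_le _ (uSharp_mem_Icc hδ₀ x)
        _ = (M / 4 + 1) * (δ * uSharpDeriv δ x ^ 2) := by rw [hsq]; ring
  have hint : IntegrableOn (fun x => (M / 4 + 1) * (δ * uSharpDeriv δ x ^ 2)) (Ioo 0 1) :=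
    (((intervalIntegrable_iff_integrableOn_Ioo_of_le zero_le_one).1
      (intervalIntegrable_uSharpDeriv_pow hδ₀ 2 0 1)).const_mul δ).const_mul _
  calc ∫ x in Ioo (0 : ℝ) 1, (1 / δ * W (uSharp δ x) + δ * uSharpDeriv δ x ^ 2)
      ≤ ∫ x in Ioo (0 : ℝ) 1, (M / 4 + 1) * (δ * uSharpDeriv δ x ^ 2) :=
        integral_mono_of_nonneg (ae_of_all _ fun x => by
          have := hW_nonneg _ (uSharp_mem_Icc hδ₀ x); positivity) hint (ae_of_all _ hpointwise)
    _ = 2 * M + 8 := by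
      rw [MeasureTheory.integral_const_mul, MeasureTheory.integral_const_mul,
        ← integral_Ioc_eq_integral_Ioo, ← intervalIntegral.integral_of_le zero_le_one,
        integral_sq_uSharpDeriv hδ]
      field_simp
      ring

def fourierExponent (k : ℤ) : ℂ := -(2 * π * I) * k

theorem norm_fourierExponent (k : ℤ) : ‖fourierExponent k‖ = 2 * π * |(k : ℝ)| := by
  simp [fourierExponent, abs_of_pos Real.pi_pos]

theorem norm_cexp_fourierExponent_mul (k : ℤ) (t : ℝ) :
    ‖cexp (fourierExponent k * t)‖ = 1 := by
  rw [show fourierExponent k * t = ((-(2 * π * k * t) : ℝ) : ℂ) * I by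
    simp only [fourierExponent]; push_cast; ring]
  exact norm_exp_ofReal_mul_I _

theorem cexp_fourierExponent_one (k : ℤ) : cexp (fourierExponent k * (1 : ℝ)) = 1 := by
  rw [show fourierExponent k * (1 : ℝ) = ((-k : ℤ) : ℂ) * (2 * π * I) by
    simp only [fourierExponent]; push_cast; ring]
  exact exp_int_mul_two_pi_mul_I _

theorem cexp_fourierExponent_half_of_odd {k : ℤ} (hk : Odd k) :
    cexp (fourierExponent k * (1 / 2)) = -1 := by
  rw [show fourierExponent k * (1 / 2) = ((-k : ℤ) : ℂ) * (π * I) by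
    simp only [fourierExponent]; push_cast; ring, exp_int_mul, exp_pi_mul_I]
  exact hk.neg.neg_one_zpow

theorem fourierCoef1_eq_intervalIntegral (u : ℝ → ℝ) (k : ℤ) :
    fourierCoef1 u k = ∫ t in (0 : ℝ)..1, (u t : ℂ) * cexp (fourierExponent k * t) := by
  rw [intervalIntegral.integral_of_le zero_le_one, integral_Ioc_eq_integral_Ioo]
  rfl

theorem fourierCoef1_uSharp {δ : ℝ} (hδ : δ ∈ Ioo (0 : ℝ) (1 / 3)) (k : ℤ) :
    δ * fourierExponent k ^ 2 * fourierCoef1 (uSharp δ) k =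
      2 * (cexp (fourierExponent k * δ) - 1 + (cexp (fourierExponent k * (1 / 2 - δ / 2 : ℝ)) -
        cexp (fourierExponent k * (1 / 2 + δ / 2 : ℝ)))) := by
  have ⟨hδ₀, hδ₁⟩ := hδ
  have hδc : (δ : ℂ) ≠ 0 := by exact_mod_cast hδ₀.ne'
  have hint (a b : ℝ) : IntervalIntegrable
      (fun t : ℝ => ((δ * uSharp δ t : ℝ) : ℂ) * cexp (fourierExponent k * t)) volume a b :=
    Continuous.intervalIntegrable (by have := continuous_uSharp hδ; fun_prop) a b
  have piece {l r : ℝ} (P Q : ℂ) (hlr : l ≤ r)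
      (hu : EqOn (fun t : ℝ => ((δ * uSharp δ t : ℝ) : ℂ)) (fun t => P * t + Q)
        (Ioo l r)) :=
    integral_mul_cexp_of_eqOn_affine (c := fourierExponent k) hlr hu
  have h₁ := piece (-2) δ hδ₀.le fun t ht => by
    simp only [(uSharp_on_descent hδ ht).1]; push_cast; field_simp; ring
  have h₂ := piece 0 (-δ) (show δ ≤ 1 / 2 - δ / 2 by linarith) fun t ht => by
    simp only [(uSharp_on_lowerPlateau hδ ht).1]; push_cast; ring
  have h₃ := piece 2 (-1) (show 1 / 2 - δ / 2 ≤ 1 / 2 + δ / 2 by linarith) fun t ht => by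
    simp only [(uSharp_on_ascent hδ ht).1]; push_cast; field_simp; ring
  have h₄ := piece 0 δ (show 1 / 2 + δ / 2 ≤ 1 by linarith) fun t ht => by
    simp only [(uSharp_on_upperPlateau hδ ht).1]; push_cast; ring
  have hcoef : (δ : ℂ) * fourierCoef1 (uSharp δ) k =
      ∫ t in (0 : ℝ)..1, ((δ * uSharp δ t : ℝ) : ℂ) * cexp (fourierExponent k * t) := by
    rw [fourierCoef1_eq_intervalIntegral, ← intervalIntegral.integral_const_mul]
    push_cast
    simp only [mul_assoc]
  rw [mul_right_comm, hcoef, mul_comm, integral_eq_add_add_add (hint 0 δ)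
    (hint δ (1 / 2 - δ / 2)) (hint (1 / 2 - δ / 2) (1 / 2 + δ / 2)) (hint (1 / 2 + δ / 2) 1),
    mul_add, mul_add, mul_add, h₁, h₂, h₃, h₄, cexp_fourierExponent_one]
  push_cast
  simp only [mul_zero, Complex.exp_zero]
  ring

theorem fourierCoef1_uSharp_of_odd {δ : ℝ} (hδ : δ ∈ Ioo (0 : ℝ) (1 / 3)) {k : ℤ}
    (hk : Odd k) :
    δ * fourierExponent k ^ 2 * fourierCoef1 (uSharp δ) k =
      2 * (cexp (2 * (fourierExponent k * (δ / 2))) - 1 +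
        (cexp (fourierExponent k * (δ / 2)) - cexp (-(fourierExponent k * (δ / 2))))) := by
  have hshift (s : ℂ) :
      cexp (fourierExponent k * (1 / 2 + s)) = -cexp (fourierExponent k * s) := by
    rw [mul_add, exp_add, cexp_fourierExponent_half_of_odd hk, neg_one_mul]
  rw [fourierCoef1_uSharp hδ]
  push_cast
  rw [sub_eq_add_neg (1 / 2 : ℂ), hshift, hshift, mul_neg]
  ring_nf

theorem norm_ofReal_mul_fourierExponent_sq {δ : ℝ} (hδ : 0 ≤ δ) (k : ℤ) :
    ‖(δ : ℂ) * fourierExponent k ^ 2‖ = δ * (2 * π * |(k : ℝ)|) ^ 2 := by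
  rw [norm_mul, norm_pow, norm_fourierExponent, norm_real, Real.norm_of_nonneg hδ]

theorem norm_fourierCoef1_uSharp_le {δ : ℝ} (hδ : δ ∈ Ioo (0 : ℝ) (1 / 3)) {k : ℤ}
    (hk : k ≠ 0) :
    ‖fourierCoef1 (uSharp δ) k‖ ≤ 8 / (δ * (2 * π * |(k : ℝ)|) ^ 2) := by
  have hpos : 0 < δ * (2 * π * |(k : ℝ)|) ^ 2 := by
    have := abs_pos.2 (Int.cast_ne_zero.2 hk : (k : ℝ) ≠ 0)
    have := hδ.1
    positivity
  have hbound : ‖(δ : ℂ) * fourierExponent k ^ 2 * fourierCoef1 (uSharp δ) k‖ ≤ 8 := by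
    have h₁ := norm_cexp_fourierExponent_mul k
    have := norm_add_le_of_le (norm_sub_le_of_le (h₁ δ).le norm_one.le)
      (norm_sub_le_of_le (h₁ (1 / 2 - δ / 2)).le (h₁ (1 / 2 + δ / 2)).le)
    rw [fourierCoef1_uSharp hδ, norm_mul, Complex.norm_two]
    linarith
  rw [norm_mul, norm_ofReal_mul_fourierExponent_sq hδ.1.le] at hbound
  rwa [le_div_iff₀ hpos, mul_comm]

theorem norm_fourierCoef1_uSharp_ge {δ : ℝ} (hδ : δ ∈ Ioo (0 : ℝ) (1 / 3)) {k : ℤ}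
    (hk : Odd k) (hsmall : 2 * π * |(k : ℝ)| * δ ≤ 1) :
    2 / (π * |(k : ℝ)|) - 3 * δ ≤ ‖fourierCoef1 (uSharp δ) k‖ := by
  have hδ₀ := hδ.1
  have hk₀ : 0 < |(k : ℝ)| := abs_pos.2 (Int.cast_ne_zero.2 (by rintro rfl; simp at hk))
  set w := fourierExponent k * (δ / 2)
  set F := cexp (2 * w) - 1 + (cexp w - cexp (-w))
  have hw : ‖w‖ = π * |(k : ℝ)| * δ := by
    rw [norm_mul, norm_fourierExponent, norm_div, norm_real, Real.norm_of_nonneg hδ₀.le,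
      Complex.norm_two]
    ring
  have hF : 4 * ‖w‖ - 6 * ‖w‖ ^ 2 ≤ ‖F‖ := by
    have hR := norm_exp_two_mul_sub_one_add_exp_sub_exp_neg_sub_le (w := w) (by rw [hw]; linarith)
    have htri := norm_sub_le F (F - 4 * w)
    rw [sub_sub_cancel, norm_mul, Complex.norm_ofNat] at htri
    linarith
  have hcoef :
      δ * (2 * π * |(k : ℝ)|) ^ 2 * ‖fourierCoef1 (uSharp δ) k‖ = 2 * ‖F‖ := by
    rw [← norm_ofReal_mul_fourierExponent_sq hδ₀.le, ← norm_mul,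
      fourierCoef1_uSharp_of_odd hδ hk, norm_mul, Complex.norm_two]
  refine le_of_mul_le_mul_left ?_ (by positivity : 0 < δ * (2 * π * |(k : ℝ)|) ^ 2)
  calc δ * (2 * π * |(k : ℝ)|) ^ 2 * (2 / (π * |(k : ℝ)|) - 3 * δ)
      = 2 * (4 * (π * |(k : ℝ)| * δ) - 6 * (π * |(k : ℝ)| * δ) ^ 2) := by field_simp; ring
    _ ≤ δ * (2 * π * |(k : ℝ)|) ^ 2 * ‖fourierCoef1 (uSharp δ) k‖ := by
        rw [hcoef, ← hw]; linarith

theorem inv_le_abs_mul_norm_fourierCoef1_uSharp_sq {δ : ℝ} (hδ : δ ∈ Ioo (0 : ℝ) (1 / 3))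
    {k : ℤ} (hk : Odd k) (hsmall : 3 * π * |(k : ℝ)| * δ ≤ 1) :
    1 / (π ^ 2 * |(k : ℝ)|) ≤ |(k : ℝ)| * ‖fourierCoef1 (uSharp δ) k‖ ^ 2 := by
  have hk₀ : 0 < |(k : ℝ)| := abs_pos.2 (Int.cast_ne_zero.2 (by rintro rfl; simp at hk))
  have hge := norm_fourierCoef1_uSharp_ge hδ hk (by nlinarith [hδ.1, Real.pi_pos])
  have h3δ : 3 * δ ≤ 1 / (π * |(k : ℝ)|) := by
    rw [le_div_iff₀ (by positivity)]; linarith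
  have hlow : 1 / (π * |(k : ℝ)|) ≤ ‖fourierCoef1 (uSharp δ) k‖ := by
    have : 2 / (π * |(k : ℝ)|) = 2 * (1 / (π * |(k : ℝ)|)) := by ring
    linarith
  calc 1 / (π ^ 2 * |(k : ℝ)|) = |(k : ℝ)| * (1 / (π * |(k : ℝ)|)) ^ 2 := by field_simp
    _ ≤ |(k : ℝ)| * ‖fourierCoef1 (uSharp δ) k‖ ^ 2 := by gcongr

theorem summable_abs_mul_norm_fourierCoef1_uSharp_sq {δ : ℝ}
    (hδ : δ ∈ Ioo (0 : ℝ) (1 / 3)) :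
    Summable fun k : ℤ => |(k : ℝ)| * ‖fourierCoef1 (uSharp δ) k‖ ^ 2 := by
  refine Summable.of_nonneg_of_le (fun k => by positivity) (fun k => ?_)
    ((Real.summable_abs_int_rpow (by norm_num : (1 : ℝ) < 3)).mul_left (4 / (π ^ 4 * δ ^ 2)))
  rcases eq_or_ne k 0 with rfl | hk
  · simp
  have hk₀ : 0 < |(k : ℝ)| := abs_pos.2 (Int.cast_ne_zero.2 hk)
  calc |(k : ℝ)| * ‖fourierCoef1 (uSharp δ) k‖ ^ 2
      ≤ |(k : ℝ)| * (8 / (δ * (2 * π * |(k : ℝ)|) ^ 2)) ^ 2 := by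
        gcongr; exact norm_fourierCoef1_uSharp_le hδ hk
    _ = 4 / (π ^ 4 * δ ^ 2) * |(k : ℝ)| ^ (-3 : ℝ) := by
        rw [Real.rpow_neg hk₀.le, show (3 : ℝ) = (3 : ℕ) by norm_num, Real.rpow_natCast]
        have := hδ.1
        field_simp
        ring

theorem sum_le_seminormHhalfSq_uSharp {δ : ℝ} (hδ : δ ∈ Ioo (0 : ℝ) (1 / 3)) {N : ℕ}
    (hN : 3 * π * (2 * N + 1) * δ ≤ 1) :
    1 / π ^ 2 * ∑ j ∈ Finset.range N, 1 / (2 * (j : ℝ) + 1) ≤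
      seminormHhalfSq (uSharp δ) := by
  have hinj : InjOn (fun j : ℕ => 2 * (j : ℤ) + 1) (Finset.range N) :=
    fun a _ b _ hab => by simp only at hab; omega
  refine le_trans ?_ ((summable_abs_mul_norm_fourierCoef1_uSharp_sq hδ).sum_le_tsum
    ((Finset.range N).image fun j : ℕ => 2 * (j : ℤ) + 1) fun k _ => by positivity)
  rw [Finset.sum_image hinj, Finset.mul_sum]
  refine Finset.sum_le_sum fun j hj => ?_
  have hcast : |((2 * (j : ℤ) + 1 : ℤ) : ℝ)| = 2 * j + 1 := by
    push_cast; exact abs_of_pos (by positivity)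
  have hjN : (j : ℝ) ≤ N := by exact_mod_cast (Finset.mem_range.1 hj).le
  have := inv_le_abs_mul_norm_fourierCoef1_uSharp_sq hδ (odd_two_mul_add_one (j : ℤ))
    (by rw [hcast]; nlinarith [hδ.1, Real.pi_pos])
  rwa [one_div_mul_one_div, ← hcast]

theorem tendsto_seminormHhalfSq_uSharp :
    Tendsto (fun δ => seminormHhalfSq (uSharp δ)) (𝓝[>] 0) atTop := by
  refine tendsto_atTop.2 fun C => ?_
  obtain ⟨N, hN⟩ := ((tendsto_sum_range_one_div_two_mul_add_one_atTop.const_mul_atTop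
    (by positivity : 0 < 1 / π ^ 2)).eventually_ge_atTop C).exists
  filter_upwards [Ioo_mem_nhdsGT (by norm_num : (0 : ℝ) < 1 / 3),
    Ioo_mem_nhdsGT (by positivity : 0 < 1 / (3 * π * (2 * N + 1)))] with δ hδ hδN
  refine hN.trans (sum_le_seminormHhalfSq_uSharp hδ ?_)
  have := (lt_div_iff₀ (by positivity)).1 hδN.2
  linarith

/-- if `W` satisfies (H1), there is NO constant `c > 0` such that
`c·|u|²_{H^{1/2}} ≤ ∫₀¹ ((1/δ)W(u) + δ|u'|²)` holds for all periodic
`u ∈ W^{1,2}_per((0,1);[−1,1])` and all `δ > 0`.  Concretely, for `0 < δ < 1/8`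
the function `u_δ` satisfies `∫₀¹ ((1/δ)W(u_δ) + δ|u_δ'|²) ≤ 2·max_{[−1,1]}W + 8`,
while `|u_δ|²_{H^{1/2}} → ∞` as `δ → 0`. -/
theorem no_H_half_interpolation (W : ℝ → ℝ)
    (hW_cont : ContinuousOn W (Icc (-1:ℝ) 1))
    (hW_nonneg : ∀ x ∈ Icc (-1:ℝ) 1, 0 ≤ W x)
    (hW_zero : ∀ x ∈ Icc (-1:ℝ) 1, (W x = 0 ↔ x = -1 ∨ x = 1)) :
    (¬ ∃ c : ℝ, 0 < c ∧ ∀ u u' : ℝ → ℝ, IsPerW12 u u' → ∀ δ : ℝ, 0 < δ →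
        c * seminormHhalfSq u ≤
          ∫ x in Ioo (0:ℝ) 1, (1 / δ * W (u x) + δ * u' x ^ 2)) ∧
    (∀ δ : ℝ, δ ∈ Ioo (0:ℝ) (1 / 8) →
        (∫ x in Ioo (0:ℝ) 1, (1 / δ * W (uSharp δ x) + δ * uSharpDeriv δ x ^ 2)) ≤
          2 * sSup (W '' Icc (-1:ℝ) 1) + 8) ∧
    Tendsto (fun δ : ℝ => seminormHhalfSq (uSharp δ))
      (nhdsWithin 0 (Ioo (0:ℝ) (1 / 8))) atTop := by
  have hW_le : ∀ x ∈ Icc (-1 : ℝ) 1, W x ≤ sSup (W '' Icc (-1 : ℝ) 1) := fun x hx =>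
    le_csSup (isCompact_Icc.image_of_continuousOn hW_cont).bddAbove (mem_image_of_mem W hx)
  have hδ_mem : ∀ δ ∈ Ioo (0 : ℝ) (1 / 8), δ ∈ Ioo (0 : ℝ) (1 / 3) :=
    fun δ hδ => ⟨hδ.1, by linarith [hδ.2]⟩
  have henergy : ∀ δ ∈ Ioo (0 : ℝ) (1 / 8),
      ∫ x in Ioo (0 : ℝ) 1, (1 / δ * W (uSharp δ x) + δ * uSharpDeriv δ x ^ 2) ≤
        2 * sSup (W '' Icc (-1 : ℝ) 1) + 8 := fun δ hδ =>
    integral_energy_uSharp_le (hδ_mem δ hδ) hW_nonneg hW_le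
      ((hW_zero (-1) (by norm_num)).2 (Or.inl rfl)) ((hW_zero 1 (by norm_num)).2 (Or.inr rfl))
  have hblowup : Tendsto (fun δ => seminormHhalfSq (uSharp δ)) (𝓝[Ioo 0 (1 / 8)] 0) atTop :=
    tendsto_seminormHhalfSq_uSharp.mono_left (nhdsWithin_mono _ Ioo_subset_Ioi_self)
  refine ⟨?_, henergy, hblowup⟩
  rintro ⟨c, hc, hinterp⟩
  have := left_nhdsWithin_Ioo_neBot (by norm_num : (0 : ℝ) < 1 / 8)
  obtain ⟨δ, hδ, hlarge⟩ := (eventually_mem_nhdsWithin.and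
    (hblowup.eventually_gt_atTop ((2 * sSup (W '' Icc (-1 : ℝ) 1) + 8) / c))).exists
  have hbound := hinterp _ _ (uSharp_isPerW12 (hδ_mem δ hδ)) δ hδ.1
  rw [div_lt_iff₀' hc] at hlarge
  linarith [henergy δ hδ]
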